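/- For r ≥ 1, k ≥ 0 and n ≥ k+r+1, the total number of left asymmetric peaks of weight k+1 over all partial Dyck paths from (0,0) to (2n-r, r) equals r·binom(2(n-k)-r-3, n-k-r-1) + binom(2(n-k)-r-3, n-k). -/

import Mathlib

/-- A path (`true` = up step, `false` = down step) never goes below the x-axis. -/
def DyckNonneg (p : List Bool) : Prop :=
  ∀ q : List Bool, q <+: p → q.count false ≤ q.count true

/-- Partial Dyck paths from (0,0) to (2n-r, r) (n up steps, n-r down steps, never
below the x-axis) with a distinguished left asymmetric peak of weight k+1: a
decomposition `A ++ u^a ++ d^{k+1} ++ B` with `a ≥ k+2` and both runs maximal. -/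
def PartialLeftAsymPeakMarked (n r k : ℕ) : Type :=
  { q : List Bool × ℕ × List Bool //
      k + 2 ≤ q.2.1 ∧
      q.1.getLast? ≠ some true ∧
      q.2.2.head? ≠ some false ∧
      DyckNonneg (q.1 ++ List.replicate q.2.1 true ++ List.replicate (k + 1) false ++ q.2.2) ∧
      (q.1 ++ List.replicate q.2.1 true ++ List.replicate (k + 1) false ++ q.2.2).count true
        = n ∧
      (q.1 ++ List.replicate q.2.1 true ++ List.replicate (k + 1) false ++ q.2.2).length
        = 2 * n - r }

/-!
Put `m = n - k - 1` and `L = 2m - r`. Cutting `u^{k+1} d^{k+1}` out of the marked peak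
`A u^a d^{k+1} B` leaves a nonnegative path of length `L` with `m` up steps and a marked up step
(the last one of `u^{a-k-1}`) that is not followed by a down step; conversely `A` and `a` are
recovered from the maximal run of up steps ending at the mark. Marking any of the `m` up steps
instead, the marks followed by a down step are peaks `ud`, and these correspond to inserting `ud`
at one of `L - 1` places into a nonnegative path of length `L - 2`. The ballot numbers
`C(L, t) - C(L, t + 1)` count nonnegative paths, and what remains is a binomial identity.
-/

open List

section Splittings

variable {α : Type*}

theorem card_append_mem {S : Set (List α)} {L : ℕ} (hS : ∀ l ∈ S, l.length = L) :
    Nat.card {q : List α × List α // q.1 ++ q.2 ∈ S} = (L + 1) * Nat.card S := by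
  let e : {q : List α × List α // q.1 ++ q.2 ∈ S} ≃ S × Fin (L + 1) :=
    { toFun q := (⟨q.1.1 ++ q.1.2, q.2⟩,
        ⟨q.1.1.length, by have := hS _ q.2; rw [length_append] at this; omega⟩)
      invFun p := ⟨(p.1.1.take p.2, p.1.1.drop p.2), by simp⟩
      left_inv := by rintro ⟨⟨X, Y⟩, h⟩; simp
      right_inv := by
        rintro ⟨⟨l, hl⟩, i⟩
        refine Prod.ext (Subtype.ext (take_append_drop _ _)) (Fin.ext ?_)
        simp [hS l hl, i.is_le] }
  rw [Nat.card_congr e, Nat.card_prod, Nat.card_fin, mul_comm]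

def appendConsEquiv (a : α) (l : List α) :
    {q : List α × List α // q.1 ++ a :: q.2 = l} ≃ {i : Fin l.length // l[i] = a} where
  toFun q := ⟨⟨q.1.1.length, by simp [← q.2]⟩, by obtain ⟨⟨X, Y⟩, rfl⟩ := q; simp⟩
  invFun i := ⟨(l.take i, l.drop (i + 1)), by
    conv_rhs => rw [← take_append_drop i l, drop_eq_getElem_cons i.1.2]
    exact congrArg (_ ++ · :: _) i.2.symm⟩
  left_inv := by rintro ⟨⟨X, Y⟩, rfl⟩; simp
  right_inv := by rintro ⟨i, hi⟩; ext; simp [i.2.le]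

def appendConsMemEquiv (S : Set (List α)) (a : α) :
    {q : List α × List α // q.1 ++ a :: q.2 ∈ S} ≃
      Σ l : S, {i : Fin l.1.length // l.1[i] = a} :=
  (Equiv.sigmaSubtypeFiberEquivSubtype (fun q : List α × List α => q.1 ++ a :: q.2)
    (q := (· ∈ S)) fun _ => Iff.rfl).symm.trans
    (Equiv.sigmaCongrRight fun l => appendConsEquiv a l)

theorem card_getElem_eq_count [DecidableEq α] (a : α) (l : List α) :
    Nat.card {i : Fin l.length // l[i] = a} = l.count a := by
  rw [Nat.card_eq_fintype_card, Fintype.card_subtype]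
  exact Fin.card_filter_univ_eq_vector_get_eq_count a ⟨l, rfl⟩

theorem card_append_cons_mem [DecidableEq α] {S : Set (List α)} (hS : S.Finite) {a : α} {t : ℕ}
    (ht : ∀ l ∈ S, l.count a = t) :
    Nat.card {q : List α × List α // q.1 ++ a :: q.2 ∈ S} = t * Nat.card S := by
  have := hS.fintype
  rw [Nat.card_congr (appendConsMemEquiv S a), Nat.card_sigma,
    Finset.sum_congr rfl fun l _ => (card_getElem_eq_count a l.1).trans (ht l.1 l.2)]
  simp [mul_comm]

theorem card_append_cons_mem_eq_add {S : Set (List α)} (hS : S.Finite) (a b : α) :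
    Nat.card {q : List α × List α // q.1 ++ a :: q.2 ∈ S} =
      Nat.card {q : List α × List α // q.1 ++ a :: q.2 ∈ S ∧ q.2.head? ≠ some b} +
        Nat.card {q : List α × List α // q.1 ++ a :: b :: q.2 ∈ S} := by
  let e : {q : List α × List α // q.1 ++ a :: q.2 ∈ S ∧ q.2.head? ≠ some b} ⊕
      {q : List α × List α // q.1 ++ a :: b :: q.2 ∈ S} ≃
      {q : List α × List α // q.1 ++ a :: q.2 ∈ S} :=
    .ofBijective
      (Sum.elim (fun q => ⟨q.1, q.2.1⟩) fun q => ⟨(q.1.1, b :: q.1.2), q.2⟩) <| by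
      refine ⟨Function.Injective.sumElim ?_ ?_ ?_, ?_⟩
      · exact fun q q' h => Subtype.ext (congrArg Subtype.val h :)
      · rintro ⟨⟨X, Y⟩, h⟩ ⟨⟨X', Y'⟩, h'⟩ he
        simp_all
      · intro q q' he
        exact q.2.2 (by simpa using congrArg (·.1.2.head?) he)
      · rintro ⟨⟨X, _ | ⟨c, Y⟩⟩, h⟩
        · exact ⟨.inl ⟨(X, []), h, by simp⟩, rfl⟩
        by_cases hc : c = b
        · subst hc
          exact ⟨.inr ⟨(X, Y), h⟩, rfl⟩
        · exact ⟨.inl ⟨(X, c :: Y), h, by simpa using hc⟩, rfl⟩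
  have := hS.to_subtype
  have := Finite.of_equiv _ (appendConsMemEquiv S a).symm
  have := Finite.of_injective _ (e.injective.comp Sum.inl_injective)
  have := Finite.of_injective _ (e.injective.comp Sum.inr_injective)
  rw [← Nat.card_congr e, Nat.card_sum]

theorem rtakeWhile_append_replicate [DecidableEq α] {A : List α} {a : α}
    (hA : A.getLast? ≠ some a) (s : ℕ) :
    (A ++ replicate s a).rtakeWhile (· == a) = replicate s a := by
  induction s with
  | zero =>
    rw [replicate_zero, append_nil, rtakeWhile_eq_nil_iff]
    intro hne
    simpa [getLast?_eq_some_getLast hne] using hA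
  | succ s ih =>
    rw [replicate_succ', ← append_assoc, rtakeWhile_concat_pos _ _ _ (by simp), ih]

def appendReplicateEquiv [DecidableEq α] (a : α) :
    {p : List α × ℕ // p.1.getLast? ≠ some a} ≃ List α where
  toFun p := p.1.1 ++ replicate p.1.2 a
  invFun l := ⟨(l.rdropWhile (· == a), (l.rtakeWhile (· == a)).length), by
    intro h
    have hne : l.rdropWhile (· == a) ≠ [] := by rintro h0; simp [h0] at h
    rw [getLast?_eq_some_getLast hne, Option.some.injEq] at h
    simpa [h] using rdropWhile_last_not _ _ hne⟩
  left_inv := by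
    rintro ⟨⟨A, s⟩, hA⟩
    have h := rtakeWhile_append_replicate hA s
    have h' := rdropWhile_append_rtakeWhile (p := (· == a)) (l := A ++ replicate s a)
    rw [h, append_left_inj] at h'
    simp [h, h']
  right_inv l := by
    have h : l.rtakeWhile (· == a) = replicate (l.rtakeWhile (· == a)).length a :=
      eq_replicate_length.2 fun b hb => by simpa using mem_rtakeWhile_imp hb
    simp only
    rw [← h, rdropWhile_append_rtakeWhile]

end Splittings

theorem Nat.choose_succ_le_choose {n k : ℕ} (h : n ≤ 2 * k + 1) :
    n.choose (k + 1) ≤ n.choose k := by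
  refine Nat.le_of_mul_le_mul_right ?_ k.succ_pos
  rw [Nat.choose_succ_right_eq]
  exact Nat.mul_le_mul_left _ (by omega)

theorem Nat.choose_le_choose_succ {n k : ℕ} (h : 2 * k < n) :
    n.choose k ≤ n.choose (k + 1) := by
  refine Nat.le_of_mul_le_mul_right ?_ k.succ_pos
  rw [Nat.choose_succ_right_eq]
  exact Nat.mul_le_mul_left _ (by omega)

theorem Nat.mul_choose_sub_one (n k : ℕ) :
    n * (n - 1).choose k = n.choose (k + 1) * (k + 1) := by
  rcases n with _ | n
  · simp
  · simpa using Nat.add_one_mul_choose_eq n k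

theorem add_one_mul_choose_sub_choose {N c r : ℕ} (h : N + r = 2 * c + 1) (hr : r ≤ c + 1) :
    (c + 1) * ((N + 1).choose (c + 1) - (N + 1).choose (c + 2)) =
      N * ((N - 1).choose c - (N - 1).choose (c + 1)) + r * N.choose c + N.choose (c + 2) := by
  have h1 := Nat.choose_succ_le_choose (n := N + 1) (k := c + 1) (by omega)
  have h2 := Nat.choose_succ_le_choose (n := N - 1) (k := c) (by omega)
  have e1 := Nat.mul_choose_sub_one N c
  have e2 := Nat.mul_choose_sub_one N (c + 1)
  have habs := Nat.choose_succ_right_eq N c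
  zify [h1, h2, (by omega : c ≤ N)] at e1 e2 habs ⊢
  rw [Nat.choose_succ_succ' N c, Nat.choose_succ_succ' N (c + 1)]
  push_cast
  rw [show (N : ℤ) - c = c + 1 - r by omega] at habs
  linear_combination e2 - e1 - habs

theorem DyckNonneg.count_false_le {p : List Bool} (h : DyckNonneg p) :
    p.count false ≤ p.count true :=
  h p (prefix_refl p)

theorem dyckNonneg_nil : DyckNonneg [] := by
  simp [DyckNonneg]

theorem dyckNonneg_concat_iff {p : List Bool} {b : Bool} :
    DyckNonneg (p ++ [b]) ↔
      DyckNonneg p ∧ (p ++ [b]).count false ≤ (p ++ [b]).count true := by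
  simp only [DyckNonneg, prefix_concat_iff, or_imp, forall_and, forall_eq]
  exact and_comm

theorem dyckNonneg_concat_true_iff {p : List Bool} :
    DyckNonneg (p ++ [true]) ↔ DyckNonneg p := by
  rw [dyckNonneg_concat_iff, and_iff_left_iff_imp]
  intro h
  simpa using Nat.le_succ_of_le h.count_false_le

theorem dyckNonneg_insert_up_down_iff (X Y : List Bool) :
    DyckNonneg (X ++ true :: false :: Y) ↔ DyckNonneg (X ++ Y) := by
  induction Y using reverseRecOn with
  | nil =>
    rw [show X ++ [true, false] = X ++ [true] ++ [false] by simp, dyckNonneg_concat_iff,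
      dyckNonneg_concat_true_iff, append_nil, and_iff_left_iff_imp]
    intro h
    simpa using h.count_false_le
  | append_singleton Y b ih =>
    rw [show X ++ true :: false :: (Y ++ [b]) = X ++ true :: false :: Y ++ [b] by simp,
      ← append_assoc, dyckNonneg_concat_iff, dyckNonneg_concat_iff, ih]
    exact and_congr_right fun _ => by simp [count_append]; omega

theorem dyckNonneg_insert_mountain_iff (X Y : List Bool) (j : ℕ) :
    DyckNonneg (X ++ replicate j true ++ replicate j false ++ Y) ↔ DyckNonneg (X ++ Y) := by
  induction j with
  | zero => simp
  | succ j ih =>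
    rw [← ih, show X ++ replicate (j + 1) true ++ replicate (j + 1) false ++ Y
        = X ++ replicate j true ++ true :: false :: (replicate j false ++ Y) by
          rw [replicate_succ', replicate_succ]; simp]
    simpa using dyckNonneg_insert_up_down_iff (X ++ replicate j true) (replicate j false ++ Y)

def nonnegPaths (L t : ℕ) : Set (List Bool) :=
  {p | DyckNonneg p ∧ p.count true = t ∧ p.length = L}

theorem nonnegPaths_finite (L t : ℕ) : (nonnegPaths L t).Finite :=
  (List.finite_length_eq Bool L).subset fun _ hp => hp.2.2

theorem nonnegPaths_eq_empty {L t : ℕ} (h : 2 * t < L ∨ L < t) : nonnegPaths L t = ∅ := by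
  refine Set.eq_empty_of_forall_notMem fun p ⟨hp, hc, hl⟩ => ?_
  have := p.count_true_add_count_false
  have := hp.count_false_le
  omega

theorem nonnegPaths_zero_zero : nonnegPaths 0 0 = {[]} := by
  ext p
  simp only [nonnegPaths, Set.mem_ofPred_eq, length_eq_zero_iff, Set.mem_singleton_iff]
  exact ⟨fun h => h.2.2, by rintro rfl; exact ⟨dyckNonneg_nil, rfl, rfl⟩⟩

theorem nonnegPaths_succ_succ {L t : ℕ} (h : L ≤ 2 * t + 1) :
    nonnegPaths (L + 1) (t + 1) =
      (· ++ [true]) '' nonnegPaths L t ∪ (· ++ [false]) '' nonnegPaths L (t + 1) := by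
  ext p
  rcases eq_nil_or_concat p with rfl | ⟨q, b, rfl⟩
  · simp [nonnegPaths]
  · cases b <;> simp [nonnegPaths, dyckNonneg_concat_iff] <;> intro hc hl hq <;>
      have := q.count_true_add_count_false <;> have := hq.count_false_le <;> omega

theorem ncard_nonnegPaths (L t : ℕ) :
    (nonnegPaths L t).ncard = L.choose t - L.choose (t + 1) := by
  induction L generalizing t with
  | zero =>
    rcases t with _ | t
    · simp [nonnegPaths_zero_zero]
    · simp [nonnegPaths_eq_empty (L := 0) (t := t + 1) (by omega)]
  | succ L ih =>
    rcases lt_or_ge (2 * t) (L + 1) with h | h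
    · rw [nonnegPaths_eq_empty (.inl h), Set.ncard_empty,
        Nat.sub_eq_zero_of_le (Nat.choose_le_choose_succ h)]
    obtain ⟨u, rfl⟩ : ∃ u, t = u + 1 := ⟨t - 1, by omega⟩
    have hdisj : Disjoint ((· ++ [true]) '' nonnegPaths L u)
        ((· ++ [false]) '' nonnegPaths L (u + 1)) := by
      simp [Set.disjoint_left]
    rw [nonnegPaths_succ_succ (by omega),
      Set.ncard_union_eq hdisj ((nonnegPaths_finite _ _).image _)
        ((nonnegPaths_finite _ _).image _),
      Set.ncard_image_of_injective _ (append_left_injective _),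
      Set.ncard_image_of_injective _ (append_left_injective _), ih, ih,
      Nat.choose_succ_succ', Nat.choose_succ_succ' L (u + 1)]
    have := Nat.choose_succ_le_choose (n := L) (k := u) (by omega)
    have := Nat.choose_succ_le_choose (n := L) (k := u + 1) (by omega)
    omega

theorem insert_mountain_mem_nonnegPaths_iff (X Y : List Bool) (j L t : ℕ) :
    X ++ replicate j true ++ replicate j false ++ Y ∈ nonnegPaths (L + 2 * j) (t + j) ↔
      X ++ Y ∈ nonnegPaths L t := by
  simp only [nonnegPaths, Set.mem_ofPred_eq, dyckNonneg_insert_mountain_iff]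
  exact and_congr_right fun _ => by simp [count_append, count_replicate]; omega

-- For `L = 0` both sides vanish, so the truncated `L - 1` is harmless.
theorem card_insert_up_down_mem_nonnegPaths (L m : ℕ) :
    Nat.card {q : List Bool × List Bool //
        q.1 ++ true :: false :: q.2 ∈ nonnegPaths (L + 1) (m + 1)}
      = L * Nat.card (nonnegPaths (L - 1) m) := by
  rcases L with _ | L
  · rw [zero_mul, Nat.card_eq_zero]
    exact .inl ⟨fun q => by have := q.2.2.2; simp at this; omega⟩
  · rw [Nat.add_sub_cancel, ← card_append_mem fun l hl => hl.2.2]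
    exact Nat.card_congr <| Equiv.subtypeEquivRight fun q => by
      simpa using insert_mountain_mem_nonnegPaths_iff q.1 q.2 1 L m

theorem card_up_not_before_down_add (L m : ℕ) :
    Nat.card {q : List Bool × List Bool //
        q.1 ++ true :: q.2 ∈ nonnegPaths (L + 1) (m + 1) ∧ q.2.head? ≠ some false}
      + L * Nat.card (nonnegPaths (L - 1) m)
      = (m + 1) * Nat.card (nonnegPaths (L + 1) (m + 1)) := by
  rw [← card_insert_up_down_mem_nonnegPaths,
    ← card_append_cons_mem_eq_add (nonnegPaths_finite _ _),
    card_append_cons_mem (nonnegPaths_finite _ _) fun l hl => hl.2.1]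

theorem leftAsymPeak_iff_mem_nonnegPaths {L m k r : ℕ} (hL : L + r = 2 * m)
    (A B : List Bool) (s : ℕ) :
    (DyckNonneg (A ++ replicate (s + (k + 2)) true ++ replicate (k + 1) false ++ B) ∧
      (A ++ replicate (s + (k + 2)) true ++ replicate (k + 1) false ++ B).count true
        = m + k + 1 ∧
      (A ++ replicate (s + (k + 2)) true ++ replicate (k + 1) false ++ B).length
        = 2 * (m + k + 1) - r) ↔
      A ++ replicate s true ++ true :: B ∈ nonnegPaths L m := by
  have hP : A ++ replicate (s + (k + 2)) true
      = A ++ replicate s true ++ [true] ++ replicate (k + 1) true := by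
    simp [replicate_add, replicate_succ]
  rw [show A ++ replicate s true ++ true :: B = A ++ replicate s true ++ [true] ++ B by simp,
    ← insert_mountain_mem_nonnegPaths_iff _ _ (k + 1), ← hP,
    show L + 2 * (k + 1) = 2 * (m + k + 1) - r by omega, show m + (k + 1) = m + k + 1 by omega]
  rfl

def partialLeftAsymPeakMarkedEquiv {L m k r : ℕ} (hL : L + r = 2 * m) :
    PartialLeftAsymPeakMarked (m + k + 1) r k ≃
      {q : List Bool × List Bool //
        q.1 ++ true :: q.2 ∈ nonnegPaths L m ∧ q.2.head? ≠ some false} where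
  toFun q := ⟨(appendReplicateEquiv true ⟨(q.1.1, q.1.2.1 - (k + 2)), q.2.2.1⟩, q.1.2.2), by
    obtain ⟨⟨A, a, B⟩, ha, -, hB, hP⟩ := q
    dsimp only at ha hP
    obtain ⟨s, rfl⟩ := Nat.exists_eq_add_of_le' ha
    exact ⟨by simpa [appendReplicateEquiv] using (leftAsymPeak_iff_mem_nonnegPaths hL A B s).1 hP,
      hB⟩⟩
  invFun q := ⟨(((appendReplicateEquiv true).symm q.1.1).1.1,
      ((appendReplicateEquiv true).symm q.1.1).1.2 + (k + 2), q.1.2), by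
    obtain ⟨⟨X, B⟩, hX, hB⟩ := q
    have hX' := (appendReplicateEquiv true).apply_symm_apply X
    generalize (appendReplicateEquiv true).symm X = p at hX' ⊢
    obtain ⟨⟨A, s⟩, hA⟩ := p
    replace hX' : A ++ replicate s true = X := hX'
    exact ⟨Nat.le_add_left _ _, hA, hB,
      (leftAsymPeak_iff_mem_nonnegPaths hL A B s).2 (hX' ▸ hX)⟩⟩
  left_inv := by
    rintro ⟨⟨A, a, B⟩, ha, hA, -⟩
    apply Subtype.ext
    simp only [(appendReplicateEquiv true).symm_apply_apply, Prod.mk.injEq, true_and, and_true]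
    exact Nat.sub_add_cancel ha
  right_inv := by
    rintro ⟨⟨X, B⟩, -⟩
    apply Subtype.ext
    simp only [Nat.add_sub_cancel, Prod.mk.eta, Subtype.coe_eta, Equiv.apply_symm_apply]

/-- For r ≥ 1, k ≥ 0 and n ≥ k+r+1, the total number of left asymmetric peaks of
weight k+1 over all partial Dyck paths from (0,0) to (2n-r, r) equals
r·binom(2(n-k)-r-3, n-k-r-1) + binom(2(n-k)-r-3, n-k). -/
theorem partial_left_asym_peak_count (n k r : ℕ) (hr : 1 ≤ r) (h : k + r + 1 ≤ n) :
    Nat.card (PartialLeftAsymPeakMarked n r k)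
      = r * Nat.choose (2 * (n - k) - r - 3) (n - k - r - 1)
        + Nat.choose (2 * (n - k) - r - 3) (n - k) := by
  obtain ⟨c, rfl⟩ : ∃ c, n = c + 1 + k + 1 := ⟨n - k - 2, by omega⟩
  obtain ⟨N, hN⟩ : ∃ N, N + r = 2 * c + 1 := ⟨2 * c + 1 - r, by omega⟩
  have hcount := card_up_not_before_down_add N c
  rw [Nat.card_coe_set_eq, Nat.card_coe_set_eq, ncard_nonnegPaths, ncard_nonnegPaths,
    show c + 1 + 1 = c + 2 from rfl] at hcount
  have hid := add_one_mul_choose_sub_choose hN (by omega)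
  rw [Nat.card_congr (partialLeftAsymPeakMarkedEquiv (L := N + 1) (by omega)),
    show 2 * (c + 1 + k + 1 - k) - r - 3 = N by omega,
    show c + 1 + k + 1 - k - r - 1 = c + 1 - r by omega, show c + 1 + k + 1 - k = c + 2 by omega,
    Nat.choose_symm_of_eq_add (show N = c + 1 - r + c by omega)]
  omega
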